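/- For a truncated path algebra Λ, a semisimple sequence (S_0,...,S_L) is realizable if and only if each two-term sequence (S_l, S_{l+1}) is realizable over Λ/J² for every 0 ≤ l ≤ L-1. -/

import Mathlib

open Matrix

section Framework

variable {K : Type*} [Field K] {n : ℕ}

/-- Paths in a quiver on vertices `Fin n` with `B i j` arrows from `i` to `j`. -/
inductive QPath (B : Fin n → Fin n → ℕ) : Fin n → Fin n → Type
  | nil (i : Fin n) : QPath B i i
  | cons {i j k : Fin n} (p : QPath B i j) (a : Fin (B j k)) : QPath B i k

/-- Length of a path. -/
def QPath.length {B : Fin n → Fin n → ℕ} : ∀ {i j : Fin n}, QPath B i j → ℕ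
  | _, _, .nil _ => 0
  | _, _, .cons p _ => p.length + 1

variable (K n) in
/-- A point of the representation space with dimension vector `d`. -/
abbrev RepPt (B : Fin n → Fin n → ℕ) (d : Fin n → ℕ) : Type _ :=
  ∀ i j : Fin n, Fin (B i j) → Matrix (Fin (d j)) (Fin (d i)) K

variable {B : Fin n → Fin n → ℕ} {d : Fin n → ℕ}

/-- The matrix by which a path acts under a representation point. -/
def evalPath (x : RepPt K n B d) : ∀ {i j : Fin n}, QPath B i j → Matrix (Fin (d j)) (Fin (d i)) K
  | _, _, .nil _ => 1
  | _, _, .cons p a => x _ _ a * evalPath x p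

/-- Membership in the representation variety of the truncated path algebra of Loewy length
`L+1`: all paths of length `L+1` act by zero. -/
def InRepTrunc (L : ℕ) (x : RepPt K n B d) : Prop :=
  ∀ (i j : Fin n) (p : QPath B i j), QPath.length p = L + 1 → evalPath x p = 0

/-- Evaluation of a formal `K`-linear combination of parallel paths. -/
noncomputable def evalRel (x : RepPt K n B d) {i j : Fin n} (r : QPath B i j →₀ K) :
    Matrix (Fin (d j)) (Fin (d i)) K :=
  r.sum fun p c => c • evalPath x p

/-- Membership in the representation variety of `KQ/I`, for a family `I` of relations. -/
def InRep (I : ∀ i j : Fin n, Set (QPath B i j →₀ K)) (x : RepPt K n B d) : Prop :=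
  ∀ i j : Fin n, ∀ r ∈ I i j, evalRel x r = 0

/-- The radical series of a subrepresentation `W` (for `W = ⊤`, of the module `M_x`):
`radSerIn x W (l+1)` is spanned by the images of `radSerIn x W l` under the arrows. -/
def radSerIn (x : RepPt K n B d) (W : ∀ i : Fin n, Submodule K (Fin (d i) → K)) :
    ℕ → ∀ i : Fin n, Submodule K (Fin (d i) → K)
  | 0 => W
  | l + 1 => fun j =>
      ⨆ (i : Fin n) (a : Fin (B i j)),
        Submodule.map (Matrix.mulVecLin (x i j a)) (radSerIn x W l i)

/-- The module carried by the subrepresentation `W` of `M_x` has a filtration governed by the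
semisimple sequence `S` (semisimple sequences are recorded by their dimension vectors). -/
def GovernedFiltOn (L : ℕ) (x : RepPt K n B d) (W : ∀ i : Fin n, Submodule K (Fin (d i) → K))
    (S : Fin (L + 1) → Fin n → ℕ) : Prop :=
  ∃ F : Fin (L + 2) → ∀ i : Fin n, Submodule K (Fin (d i) → K),
    (∀ i, F 0 i = W i) ∧ (∀ i, F (Fin.last (L + 1)) i = ⊥) ∧
    (∀ (l : Fin (L + 1)) (i : Fin n), F l.succ i ≤ F l.castSucc i) ∧
    (∀ (l : Fin (L + 1)) (i j : Fin n) (a : Fin (B i j)),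
      Submodule.map (Matrix.mulVecLin (x i j a)) (F l.castSucc i) ≤ F l.succ j) ∧
    (∀ (l : Fin (L + 1)) (i : Fin n),
      Module.finrank K ↥(F l.castSucc i) = Module.finrank K ↥(F l.succ i) + S l i)

/-- The module `M_x` has a filtration governed by `S`. -/
def GovernedFilt (L : ℕ) (x : RepPt K n B d) (S : Fin (L + 1) → Fin n → ℕ) : Prop :=
  GovernedFiltOn L x (fun _ => ⊤) S

/-- The subrepresentation `W` of `M_x` has radical layering `S`. -/
def HasRadLayeringOn (L : ℕ) (x : RepPt K n B d) (W : ∀ i : Fin n, Submodule K (Fin (d i) → K))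
    (S : Fin (L + 1) → Fin n → ℕ) : Prop :=
  (∀ i : Fin n, radSerIn x W (L + 1) i = ⊥) ∧
  ∀ (l : Fin (L + 1)) (i : Fin n),
    Module.finrank K ↥(radSerIn x W (l : ℕ) i) = ∑ j ∈ Finset.Ici l, S j i

/-- The module `M_x` has radical layering `S`. -/
def HasRadLayering (L : ℕ) (x : RepPt K n B d) (S : Fin (L + 1) → Fin n → ℕ) : Prop :=
  HasRadLayeringOn L x (fun _ => ⊤) S

/-- The dominance order on semisimple sequences. -/
def DomLE {L : ℕ} (S T : Fin (L + 1) → Fin n → ℕ) : Prop :=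
  ∀ (l : Fin (L + 1)) (i : Fin n), ∑ j ∈ Finset.Iic l, S j i ≤ ∑ j ∈ Finset.Iic l, T j i

variable (K) in
/-- Realizability of a semisimple sequence over the truncated path algebra. -/
def Realizable (L : ℕ) (B : Fin n → Fin n → ℕ) (S : Fin (L + 1) → Fin n → ℕ) : Prop :=
  ∃ x : RepPt K n B (fun i => ∑ l, S l i), InRepTrunc L x ∧ HasRadLayering L x S

/-- Realizability of a semisimple sequence over `KQ/I`. -/
def RealizableRel (I : ∀ i j : Fin n, Set (QPath B i j →₀ K)) (L : ℕ)
    (S : Fin (L + 1) → Fin n → ℕ) : Prop :=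
  ∃ x : RepPt K n B (fun i => ∑ l, S l i), InRep I x ∧ HasRadLayering L x S

/-- Coordinates of the affine space of representation points. -/
abbrev CoordIx (n : ℕ) (B : Fin n → Fin n → ℕ) (d : Fin n → ℕ) : Type :=
  Σ i : Fin n, Σ j : Fin n, Fin (B i j) × Fin (d j) × Fin (d i)

def coords (x : RepPt K n B d) : CoordIx n B d → K :=
  fun c => x c.1 c.2.1 c.2.2.1 c.2.2.2.1 c.2.2.2.2

/-- Zariski-closed subsets of the affine space of representation points. -/
def ZClosed (Z : Set (RepPt K n B d)) : Prop :=
  ∃ P : Set (MvPolynomial (CoordIx n B d) K),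
    Z = {x | ∀ f ∈ P, MvPolynomial.eval (coords x) f = 0}

/-- `T` is Zariski-closed in the subvariety `V`. -/
def ZClosedIn (V T : Set (RepPt K n B d)) : Prop :=
  ∃ Z : Set (RepPt K n B d), ZClosed Z ∧ T = V ∩ Z

/-- The Zariski closure of `C` inside `V`. -/
def ZClosureIn (V C : Set (RepPt K n B d)) : Set (RepPt K n B d) :=
  {x | x ∈ V ∧ ∀ Z : Set (RepPt K n B d), ZClosed Z → C ⊆ Z → x ∈ Z}

/-- Irreducibility of a subset in the Zariski topology. -/
def ZIrred (C : Set (RepPt K n B d)) : Prop :=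
  C.Nonempty ∧ ∀ Z₁ Z₂ : Set (RepPt K n B d), ZClosed Z₁ → ZClosed Z₂ →
    C ⊆ Z₁ ∪ Z₂ → C ⊆ Z₁ ∨ C ⊆ Z₂

/-- `C` is an irreducible component (a maximal irreducible subset) of `V`. -/
def IsIrredComponentOf (V C : Set (RepPt K n B d)) : Prop :=
  ZIrred C ∧ C ⊆ V ∧ ∀ C' : Set (RepPt K n B d), ZIrred C' → C' ⊆ V → C ⊆ C' → C' = C

/-- The triangularity conditions (i) and (ii) on a representation point, relative to a
decomposition `C` of the spaces at the vertices. -/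
def Triangular (L : ℕ) (x : RepPt K n B d)
    (C : Fin (L + 1) → ∀ i : Fin n, Submodule K (Fin (d i) → K)) : Prop :=
  ∀ (l : Fin (L + 1)) (i j : Fin n) (a : Fin (B i j)),
    Submodule.map (Matrix.mulVecLin (x i j a)) (C l i) ≤ ⨆ (m : Fin (L + 1)) (_ : l < m), C m j

/-- `C` is a decomposition of `K^d` induced by the semisimple sequence `S`. -/
def IsInducedDecomp (L : ℕ) (d : Fin n → ℕ) (S : Fin (L + 1) → Fin n → ℕ)
    (C : Fin (L + 1) → ∀ i : Fin n, Submodule K (Fin (d i) → K)) : Prop :=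
  (∀ i : Fin n, (⨆ l : Fin (L + 1), C l i) = ⊤) ∧
  (∀ (l : Fin (L + 1)) (i : Fin n), Module.finrank K ↥(C l i) = S l i) ∧
  (∀ i : Fin n, ∑ l : Fin (L + 1), S l i = d i)

end Framework

/-!
Both sides are equivalent to the numerical criterion `S (l+1) j ≤ ∑ i, B i j * S l i`.

Necessity: the arrows ending at `j` map the radical layers `J^l M` at the vertices `i` onto
`J^(l+1) M` at `j` modulo `J^(l+2) M`, and the part `J^(l+1) M` of `J^l M` dies modulo `J^(l+2) M`,
so each of the `B i j` arrows contributes at most `dim S l i` dimensions.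

Sufficiency: split a basis of `K ^ (∑ l, S l i)` into levels of sizes `S 0 i, …, S L i`. The
criterion says that the basis vectors of level `l + 1` at `j` can be injectively assigned a parent:
an arrow `i → j` together with a basis vector of level `l` at `i`. Letting every arrow send a
basis vector to its child along that arrow defines a representation whose `m`-th radical power
is spanned by the basis vectors of level at least `m`.
-/

open Finset Module

namespace Submodule

variable {K V W : Type*} [Field K] [AddCommGroup V] [Module K V] [AddCommGroup W] [Module K W]
  [FiniteDimensional K V]

theorem finrank_map_add_finrank_inf_ker (f : V →ₗ[K] W) (A : Submodule K V) :
    finrank K (A.map f) + finrank K ↥(A ⊓ LinearMap.ker f) = finrank K A := by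
  have h := LinearMap.finrank_range_add_finrank_ker (f.domRestrict A)
  rwa [LinearMap.range_domRestrict, LinearMap.ker_domRestrict, ← finrank_map_subtype_eq,
    map_comap_subtype] at h

theorem finrank_iSup_le_sum {ι : Type*} [Fintype ι] (f : ι → Submodule K V) :
    finrank K ↥(⨆ i, f i) ≤ ∑ i, finrank K (f i) := by
  classical
  suffices ∀ s : Finset ι, finrank K ↥(s.sup f) ≤ ∑ i ∈ s, finrank K (f i) by
    rw [← Finset.sup_univ_eq_iSup]
    exact this univ
  intro s
  induction s using Finset.induction_on with
  | empty => simp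
  | insert a s ha ih =>
    rw [Finset.sup_insert, Finset.sum_insert ha]
    exact (finrank_add_le_finrank_add_finrank _ _).trans (by omega)

end Submodule

theorem Function.exists_injective_comp_eq_of_card_fiber_le {X Y β : Type*} [Fintype X]
    [Fintype Y] [DecidableEq β] (φ : X → β) (ψ : Y → β)
    (h : ∀ b, Fintype.card {x // φ x = b} ≤ Fintype.card {y // ψ y = b}) :
    ∃ f : X → Y, Function.Injective f ∧ ∀ x, ψ (f x) = φ x := by
  have e := fun b => (Function.Embedding.nonempty_of_card_le (h b)).some
  let f : X ↪ Y := ((Equiv.sigmaFiberEquiv φ).symm.toEmbedding.trans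
    (Function.Embedding.sigmaMap (Function.Embedding.refl β) e)).trans
    (Equiv.sigmaFiberEquiv ψ).toEmbedding
  exact ⟨f, f.injective, fun x => (e (φ x) ⟨x, rfl⟩).2⟩

theorem Fin.sum_ite_val_eq {N : ℕ} (f : Fin N → ℕ) (m : ℕ) :
    (∑ l : Fin N, if (l : ℕ) = m then f l else 0) = if h : m < N then f ⟨m, h⟩ else 0 := by
  split_ifs with hm
  · rw [Fintype.sum_eq_single ⟨m, hm⟩ fun l hl => if_neg fun h => hl (Fin.ext h), if_pos rfl]
  · exact sum_eq_zero fun l _ => if_neg (by omega)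

theorem Fin.sum_ite_le_sub_sum_ite_succ_le {N : ℕ} (f : Fin N → ℕ) {m : ℕ} (hm : m < N) :
    (∑ l : Fin N, if m ≤ (l : ℕ) then f l else 0) -
      (∑ l : Fin N, if m + 1 ≤ (l : ℕ) then f l else 0) = f ⟨m, hm⟩ := by
  have hsplit : ∀ l : Fin N, (if m ≤ (l : ℕ) then f l else 0) =
      (if (l : ℕ) = m then f l else 0) + if m + 1 ≤ (l : ℕ) then f l else 0 := by
    intro l
    split_ifs <;> omega
  rw [sum_congr rfl fun l _ => hsplit l, sum_add_distrib, Fin.sum_ite_val_eq, dif_pos hm,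
    Nat.add_sub_cancel]

section RadicalSeries

variable {K : Type*} [Field K] {n : ℕ} {B : Fin n → Fin n → ℕ} {d : Fin n → ℕ}
  (x : RepPt K n B d)

theorem map_radSerIn_le (W : ∀ i : Fin n, Submodule K (Fin (d i) → K)) (m : ℕ) (i j : Fin n)
    (a : Fin (B i j)) :
    (radSerIn x W m i).map (x i j a).mulVecLin ≤ radSerIn x W (m + 1) j :=
  le_iSup_of_le i (le_iSup_of_le a le_rfl)

theorem map_evalPath_radSerIn_le (W : ∀ i : Fin n, Submodule K (Fin (d i) → K)) (m : ℕ)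
    {i j : Fin n} (p : QPath B i j) :
    (radSerIn x W m i).map (evalPath x p).mulVecLin ≤ radSerIn x W (m + p.length) j := by
  induction p with
  | nil => simp [evalPath, QPath.length]
  | cons p a ih =>
    rw [evalPath, Matrix.mulVecLin_mul, Submodule.map_comp, QPath.length, ← add_assoc]
    exact (Submodule.map_mono ih).trans (map_radSerIn_le x W (m + p.length) _ _ a)

theorem radSerIn_top_antitone (i : Fin n) :
    Antitone fun m => radSerIn x (fun _ => ⊤) m i := by
  refine antitone_nat_of_succ_le fun m => ?_
  induction m generalizing i with
  | zero => exact le_top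
  | succ m ih => exact iSup_mono fun i' => iSup_mono fun a => Submodule.map_mono (ih i')

theorem inRepTrunc_of_radSerIn_eq_bot {L : ℕ}
    (h : ∀ i, radSerIn x (fun _ => ⊤) (L + 1) i = ⊥) : InRepTrunc L x := by
  intro i j p hp
  have hmap := map_evalPath_radSerIn_le x (fun _ => ⊤) 0 p
  rw [zero_add, hp, h] at hmap
  rw [← Matrix.toLin'.map_eq_zero_iff, Matrix.toLin'_apply', ← LinearMap.range_eq_bot,
    LinearMap.range_eq_map]
  exact le_bot_iff.mp hmap

theorem finrank_radSerIn_sub_le (m : ℕ) (j : Fin n) :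
    finrank K (radSerIn x (fun _ => ⊤) (m + 1) j) -
        finrank K (radSerIn x (fun _ => ⊤) (m + 2) j) ≤
      ∑ i, B i j * (finrank K (radSerIn x (fun _ => ⊤) m i) -
        finrank K (radSerIn x (fun _ => ⊤) (m + 1) i)) := by
  set R := radSerIn x (fun _ => ⊤)
  set π := (R (m + 2) j).mkQ
  have hmap : (R (m + 1) j).map π =
      ⨆ (i) (a : Fin (B i j)), (R m i).map (π ∘ₗ (x i j a).mulVecLin) := by
    have hR : R (m + 1) j = ⨆ (i) (a : Fin (B i j)), (R m i).map (x i j a).mulVecLin := rfl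
    simp only [hR, Submodule.map_iSup, Submodule.map_comp]
  have hquot : finrank K (R (m + 1) j) - finrank K (R (m + 2) j) ≤
      finrank K ((R (m + 1) j).map π) := by
    have hrank := Submodule.finrank_map_add_finrank_inf_ker π (R (m + 1) j)
    have hker : R (m + 1) j ⊓ LinearMap.ker π ≤ R (m + 2) j := by
      rw [Submodule.ker_mkQ]
      exact inf_le_right
    have := Submodule.finrank_mono hker
    omega
  have hterm : ∀ i (a : Fin (B i j)), finrank K ((R m i).map (π ∘ₗ (x i j a).mulVecLin)) ≤
      finrank K (R m i) - finrank K (R (m + 1) i) := by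
    intro i a
    have hrank := Submodule.finrank_map_add_finrank_inf_ker (π ∘ₗ (x i j a).mulVecLin) (R m i)
    have hker : R (m + 1) i ≤ R m i ⊓ LinearMap.ker (π ∘ₗ (x i j a).mulVecLin) := by
      refine le_inf (radSerIn_top_antitone x i m.le_succ) fun v hv => ?_
      rw [LinearMap.mem_ker, LinearMap.comp_apply, Submodule.mkQ_apply,
        Submodule.Quotient.mk_eq_zero]
      exact map_radSerIn_le x _ (m + 1) i j a ⟨v, hv, rfl⟩
    have := Submodule.finrank_mono hker
    omega
  calc _ ≤ finrank K ((R (m + 1) j).map π) := hquot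
    _ ≤ ∑ i, ∑ a : Fin (B i j), finrank K ((R m i).map (π ∘ₗ (x i j a).mulVecLin)) := by
      rw [hmap]
      exact (Submodule.finrank_iSup_le_sum _).trans
        (sum_le_sum fun i _ => Submodule.finrank_iSup_le_sum _)
    _ ≤ ∑ i, ∑ _a : Fin (B i j), (finrank K (R m i) - finrank K (R (m + 1) i)) := by
      gcongr with i _ a
      exact hterm i a
    _ = _ := by simp

theorem hasRadLayering_iff_finrank_radSerIn {L : ℕ} (S : Fin (L + 1) → Fin n → ℕ) :
    HasRadLayering L x S ↔ ∀ (m : ℕ) (i : Fin n), finrank K (radSerIn x (fun _ => ⊤) m i) =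
      ∑ l : Fin (L + 1), if m ≤ (l : ℕ) then S l i else 0 := by
  have hIci : ∀ (l : Fin (L + 1)) i,
      ∑ k ∈ Ici l, S k i = ∑ k : Fin (L + 1), if (l : ℕ) ≤ k then S k i else 0 := by
    intro l i
    rw [← sum_filter]
    congr 1
    ext k
    simp only [mem_Ici, mem_filter, mem_univ, true_and, Fin.le_def]
  constructor
  · rintro ⟨hbot, hrank⟩ m i
    by_cases hm : m < L + 1
    · simpa only [hIci] using hrank ⟨m, hm⟩ i
    · have hR : radSerIn x (fun _ => ⊤) m i = ⊥ :=
        le_bot_iff.mp (hbot i ▸ radSerIn_top_antitone x i (by omega))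
      rw [hR, finrank_bot]
      exact (sum_eq_zero fun l _ => if_neg (by omega)).symm
  · intro h
    refine ⟨fun i => ?_, fun l i => by rw [h, hIci]⟩
    rw [← Submodule.finrank_eq_zero (S := radSerIn x (fun _ => ⊤) (L + 1) i), h]
    exact sum_eq_zero fun l _ => if_neg (by omega)

end RadicalSeries

theorem Realizable.le_sum_mul {K : Type*} [Field K] {n L : ℕ} {B : Fin n → Fin n → ℕ}
    {S : Fin (L + 1) → Fin n → ℕ} (h : Realizable K L B S) (l : Fin L) (j : Fin n) :
    S l.succ j ≤ ∑ i, B i j * S l.castSucc i := by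
  obtain ⟨x, -, hx⟩ := h
  have hlayer : ∀ (m : ℕ) (hm : m < L + 1) (i : Fin n),
      finrank K (radSerIn x (fun _ => ⊤) m i) - finrank K (radSerIn x (fun _ => ⊤) (m + 1) i) =
        S ⟨m, hm⟩ i := by
    intro m hm i
    rw [(hasRadLayering_iff_finrank_radSerIn x S).mp hx,
      (hasRadLayering_iff_finrank_radSerIn x S).mp hx]
    exact Fin.sum_ite_le_sub_sum_ite_succ_le (S · i) hm
  calc S l.succ j = _ := (hlayer (l + 1) (by omega) j).symm
    _ ≤ _ := finrank_radSerIn_sub_le x l j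
    _ = _ := by simp only [hlayer l (by omega)]; rfl

/-- The standard bases of the vertex spaces arranged as a forest whose edges are labelled by
arrows. -/
structure GradedForest {n : ℕ} (B : Fin n → Fin n → ℕ) (d : Fin n → ℕ) where
  depth : ∀ i, Fin (d i) → ℕ
  parent : ∀ j, {r : Fin (d j) // depth j r ≠ 0} → Σ i, Fin (B i j) × Fin (d i)
  parent_injective : ∀ j, Function.Injective (parent j)
  depth_parent : ∀ j r, depth (parent j r).1 (parent j r).2.2 + 1 = depth j r

namespace GradedForest

variable {K : Type*} [Field K] {n : ℕ} {B : Fin n → Fin n → ℕ} {d : Fin n → ℕ}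
  (F : GradedForest B d)

theorem depth_eq_of_parent_eq {j : Fin n} {r : Fin (d j)} {hr : F.depth j r ≠ 0} {i : Fin n}
    {a : Fin (B i j)} {c : Fin (d i)} (h : F.parent j ⟨r, hr⟩ = ⟨i, a, c⟩) :
    F.depth i c + 1 = F.depth j r := by
  have := F.depth_parent j ⟨r, hr⟩
  rwa [h] at this

variable (K) in
open Classical in
/-- The arrow `a : i → j` sends a basis vector to its child along `a`, or to `0` if it has
none. -/
noncomputable def rep : RepPt K n B d :=
  fun i j a => Matrix.of fun r c =>
    if ∃ h : F.depth j r ≠ 0, F.parent j ⟨r, h⟩ = ⟨i, a, c⟩ then 1 else 0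

variable (K) in
noncomputable def depthGE (m : ℕ) (i : Fin n) : Submodule K (Fin (d i) → K) :=
  Pi.spanSubset K {r | m ≤ F.depth i r}

theorem rep_mulVec_single_parent (j : Fin n) (r : {r : Fin (d j) // F.depth j r ≠ 0}) :
    F.rep K (F.parent j r).1 j (F.parent j r).2.1 *ᵥ Pi.single (F.parent j r).2.2 1 =
      Pi.single r.1 1 := by
  classical
  ext r'
  simp only [rep, Matrix.mulVec_single_one, Matrix.col_apply, Matrix.of_apply, Pi.single_apply]
  congr 1
  refine propext ⟨fun ⟨_, hp⟩ => congrArg Subtype.val (F.parent_injective j hp), ?_⟩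
  rintro rfl
  exact ⟨r.2, rfl⟩

theorem map_rep_depthGE_le (m : ℕ) (i j : Fin n) (a : Fin (B i j)) :
    (F.depthGE K m i).map (F.rep K i j a).mulVecLin ≤ F.depthGE K (m + 1) j := by
  classical
  unfold depthGE
  rw [Pi.spanSubset, Submodule.map_span_le]
  rintro _ ⟨c, hc, rfl⟩
  rw [Pi.mem_spanSubset_iff]
  intro r hr
  simp only [Pi.basisFun_apply, Matrix.mulVecLin_apply, Matrix.mulVec_single_one,
    Matrix.col_apply, rep, Matrix.of_apply, ite_eq_right_iff]
  rintro ⟨_, hp⟩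
  have := F.depth_eq_of_parent_eq hp
  simp only [Set.mem_ofPred_eq] at hc hr
  omega

theorem depthGE_succ_le_iSup (m : ℕ) (j : Fin n) :
    F.depthGE K (m + 1) j ≤
      ⨆ (i) (a : Fin (B i j)), (F.depthGE K m i).map (F.rep K i j a).mulVecLin := by
  rw [depthGE, Pi.spanSubset, Submodule.span_le]
  rintro _ ⟨r, hr, rfl⟩
  have hr : m + 1 ≤ F.depth j r := hr
  let r' : {r : Fin (d j) // F.depth j r ≠ 0} := ⟨r, by omega⟩
  set q := F.parent j r' with hq
  have hdepth : m ≤ F.depth q.1 q.2.2 := by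
    have : F.depth q.1 q.2.2 + 1 = F.depth j r := F.depth_parent j r'
    omega
  refine Submodule.mem_iSup_of_mem q.1 <| Submodule.mem_iSup_of_mem q.2.1
    ⟨Pi.single q.2.2 1, Submodule.subset_span ⟨q.2.2, hdepth, Pi.basisFun_apply _ _ _⟩, ?_⟩
  rw [Matrix.mulVecLin_apply, hq, rep_mulVec_single_parent, Pi.basisFun_apply]

theorem radSerIn_rep (m : ℕ) (j : Fin n) :
    radSerIn (F.rep K) (fun _ => ⊤) m j = F.depthGE K m j := by
  induction m generalizing j with
  | zero =>
    refine (eq_top_iff.mpr fun v _ => Pi.mem_spanSubset_iff.mpr fun r hr => ?_).symm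
    exact absurd (Nat.zero_le _) hr
  | succ m ih =>
    refine le_antisymm (iSup_le fun i => iSup_le fun a => ?_) ?_
    · rw [ih i]
      exact F.map_rep_depthGE_le m i j a
    · simp only [radSerIn, ih]
      exact F.depthGE_succ_le_iSup m j

theorem finrank_depthGE (m : ℕ) (i : Fin n) :
    finrank K (F.depthGE K m i) = #{r | m ≤ F.depth i r} := by
  classical
  rw [depthGE, Pi.dim_spanSubset, Set.ncard_eq_toFinset_card', Set.toFinset_ofPred]

theorem exists_depth_eq (depth : ∀ i, Fin (d i) → ℕ)
    (h : ∀ j m, #{r | depth j r = m + 1} ≤ ∑ i, B i j * #{c | depth i c = m}) :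
    ∃ F : GradedForest B d, F.depth = depth := by
  classical
  have hfiber : ∀ j m, Fintype.card {r : {r // depth j r ≠ 0} // depth j r - 1 = m} ≤
      Fintype.card {q : Σ i, Fin (B i j) × Fin (d i) // depth q.1 q.2.2 = m} := by
    intro j m
    calc _ = Fintype.card {r // depth j r ≠ 0 ∧ depth j r - 1 = m} :=
          Fintype.card_congr (Equiv.subtypeSubtypeEquivSubtypeInter _ _)
      _ = #{r | depth j r = m + 1} := by
          rw [Fintype.card_subtype]
          congr 1
          ext r
          simp only [mem_filter, mem_univ, true_and]
          omega
      _ ≤ ∑ i, B i j * #{c | depth i c = m} := h j m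
      _ = _ := by
          rw [Fintype.card_subtype, ← univ_sigma_univ, filter_sigma, card_sigma]
          refine sum_congr rfl fun i _ => ?_
          rw [card_filter, card_filter, Fintype.sum_prod_type]
          simp
  choose parent hinj hparent using fun j =>
    Function.exists_injective_comp_eq_of_card_fiber_le _ _ (hfiber j)
  refine ⟨⟨depth, parent, hinj, fun j r => ?_⟩, rfl⟩
  have hfib := hparent j r
  have hpos := r.2
  omega

end GradedForest

section Sufficiency

variable {n L : ℕ} (S : Fin (L + 1) → Fin n → ℕ)

/-- The level of a basis vector of `K ^ (∑ l, S l i)`, the basis being split into consecutive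
blocks of sizes `S 0 i, …, S L i`. -/
def levelDepth (i : Fin n) (c : Fin (∑ l, S l i)) : ℕ :=
  (finSigmaFinEquiv.symm c).1

theorem card_levelDepth (P : ℕ → Prop) [DecidablePred P] (i : Fin n) :
    #{c | P (levelDepth S i c)} = ∑ l : Fin (L + 1), if P l then S l i else 0 := by
  rw [← Fintype.card_subtype]
  refine (Fintype.card_congr (finSigmaFinEquiv.symm.subtypeEquiv
    (q := fun p : Σ l, Fin (S l i) => P p.1) fun _ => Iff.rfl)).trans ?_
  rw [Fintype.card_subtype, ← univ_sigma_univ, filter_sigma, card_sigma]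
  refine sum_congr rfl fun l _ => ?_
  split_ifs with hl <;> simp [hl]

theorem realizable_of_le_sum_mul {K : Type*} [Field K] {B : Fin n → Fin n → ℕ}
    (h : ∀ (l : Fin L) (j : Fin n), S l.succ j ≤ ∑ i, B i j * S l.castSucc i) :
    Realizable K L B S := by
  obtain ⟨F, hF⟩ := GradedForest.exists_depth_eq (B := B) (levelDepth S) fun j m => by
    rw [card_levelDepth S (· = m + 1), Fin.sum_ite_val_eq]
    simp only [card_levelDepth S (· = m), Fin.sum_ite_val_eq]
    by_cases hm : m < L
    · rw [dif_pos (by omega)]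
      simp only [dif_pos (by omega : m < L + 1)]
      exact h ⟨m, hm⟩ j
    · rw [dif_neg (by omega)]
      exact Nat.zero_le _
  have hlayer : HasRadLayering L (F.rep K) S := by
    refine (hasRadLayering_iff_finrank_radSerIn _ S).mpr fun m i => ?_
    rw [F.radSerIn_rep, F.finrank_depthGE, hF, card_levelDepth S (m ≤ ·)]
  exact ⟨F.rep K, inRepTrunc_of_radSerIn_eq_bot _ hlayer.1, hlayer⟩

end Sufficiency

theorem realizable_iff_le_sum_mul {K : Type*} [Field K] {n L : ℕ} {B : Fin n → Fin n → ℕ}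
    {S : Fin (L + 1) → Fin n → ℕ} :
    Realizable K L B S ↔
      ∀ (l : Fin L) (j : Fin n), S l.succ j ≤ ∑ i, B i j * S l.castSucc i :=
  ⟨Realizable.le_sum_mul, realizable_of_le_sum_mul S⟩

theorem truncated_realizability_two_term_general
    {K : Type*} [Field K] {n : ℕ} (L : ℕ) (B : Fin n → Fin n → ℕ)
    (S : Fin (L + 1) → Fin n → ℕ) :
    Realizable K L B S ↔ ∀ l : Fin L, Realizable K 1 B ![S l.castSucc, S l.succ] := by
  simp [realizable_iff_le_sum_mul, Fin.forall_fin_one]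

/-- For a truncated path algebra `Λ = KQ/⟨paths of length L+1⟩`, a semisimple
sequence `(S_0, …, S_L)` is realizable if and only if each two-term sequence `(S_l, S_(l+1))`
is realizable over `Λ/J²` (the truncated path algebra of Loewy length `2` on the same quiver)
for every `0 ≤ l ≤ L - 1`. -/
theorem truncated_realizability_two_term
    {K : Type*} [Field K] [IsAlgClosed K] {n : ℕ} (L : ℕ) (B : Fin n → Fin n → ℕ)
    (S : Fin (L + 1) → Fin n → ℕ) :
    Realizable K L B S ↔ ∀ l : Fin L, Realizable K 1 B ![S l.castSucc, S l.succ] :=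
  truncated_realizability_two_term_general L B S
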